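/- The standard cluster T₀ is a maximal noncrossing set: if a pair {x,y} of distinct points of S¹ = ℝ/2πℤ (with x, y not adjacent, i.e., the pair is not a 'side' of any degenerate configuration) is noncrossing with every dyadic pair (mπ/2ⁿ, (m+1)π/2ⁿ) in T₀, then {x,y} is itself (the image of) such a dyadic pair (m'π/2^{n'}, (m'+1)π/2^{n'}). -/

import Mathlib

open Real

/-- `p` lies (modulo 2π) in the open arc from `a` to `b` (where `a < b ≤ a + 2π`). -/
def InOpenArc (a b p : ℝ) : Prop :=
  ∃ k : ℤ, a < p + 2 * π * k ∧ p + 2 * π * k < b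

/-- The chords with endpoint pairs {a,b} and {x,y} cross on the circle S¹ = ℝ/2πℤ. -/
def CrossesR (a b x y : ℝ) : Prop :=
  (InOpenArc a b x ∧ InOpenArc b (a + 2 * π) y) ∨
  (InOpenArc a b y ∧ InOpenArc b (a + 2 * π) x)

/-- `{x',y'}` represents the same unordered pair of points of S¹ = ℝ/2πℤ as `{x,y}`. -/
def SameChord (x y x' y' : ℝ) : Prop :=
  ((∃ m : ℤ, x' = x + 2 * π * m) ∧ (∃ n : ℤ, y' = y + 2 * π * n)) ∨
  ((∃ m : ℤ, x' = y + 2 * π * m) ∧ (∃ n : ℤ, y' = x + 2 * π * n))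

/-!
A point of `{x, y}` that is not dyadic lies strictly inside a dyadic arc shorter than both arcs
into which `x` and `y` cut the circle, and that arc crosses `{x, y}`. So `x = pπ/2ᵘ` and
`y = qπ/2ᵘ` at a common level `u`. If `p` is odd, the arc of level `u - 1` from `(p-1)π/2ᵘ` to
`(p+1)π/2ᵘ` contains `x`, so `y` must be one of its endpoints and `{x, y}` is a dyadic arc of
level `u`. If `q` is odd, the same holds after rotating `(x, y)` to `(y, x + 2π)`, and if both
are even, `u` drops by one.
-/

section Circle

variable {a b x y : ℝ}

theorem inOpenArc_add_two_pi_mul (a b p : ℝ) (k : ℤ) :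
    InOpenArc (a + 2 * π * k) (b + 2 * π * k) p ↔ InOpenArc a b p := by
  constructor
  · rintro ⟨j, h₁, h₂⟩
    exact ⟨j - k, by push_cast; linarith, by push_cast; linarith⟩
  · rintro ⟨j, h₁, h₂⟩
    exact ⟨j + k, by push_cast; linarith, by push_cast; linarith⟩

theorem inOpenArc_add_two_pi (a b p : ℝ) : InOpenArc a b (p + 2 * π) ↔ InOpenArc a b p := by
  constructor
  · rintro ⟨j, h₁, h₂⟩
    exact ⟨j + 1, by push_cast; linarith, by push_cast; linarith⟩
  · rintro ⟨j, h₁, h₂⟩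
    exact ⟨j - 1, by push_cast; linarith, by push_cast; linarith⟩

theorem crossesR_comm : CrossesR a b x y ↔ CrossesR a b y x := by
  unfold CrossesR; tauto

theorem crossesR_add_two_pi_mul (k : ℤ) :
    CrossesR (a + 2 * π * k) (b + 2 * π * k) x y ↔ CrossesR a b x y := by
  simp only [CrossesR, add_right_comm a (2 * π * k) (2 * π), inOpenArc_add_two_pi_mul]

theorem crossesR_add_two_pi_right : CrossesR a b x (y + 2 * π) ↔ CrossesR a b x y := by
  simp only [CrossesR, inOpenArc_add_two_pi]

theorem crossesR_of_lt (hax : a < x) (hxb : x < b) (hby : b < y) (hya : y < a + 2 * π) :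
    CrossesR a b x y :=
  Or.inl ⟨⟨0, by simpa using hax, by simpa using hxb⟩, ⟨0, by simpa using hby, by simpa using hya⟩⟩

theorem sameChord_self (a b : ℝ) : SameChord a b a b :=
  Or.inl ⟨⟨0, by simp⟩, ⟨0, by simp⟩⟩

theorem SameChord.of_add_two_pi_mul {k : ℤ} (h : SameChord (a + 2 * π * k) (b + 2 * π * k) x y) :
    SameChord a b x y := by
  rcases h with ⟨⟨i, hi⟩, ⟨j, hj⟩⟩ | ⟨⟨i, hi⟩, ⟨j, hj⟩⟩
  · exact Or.inl ⟨⟨k + i, by rw [hi]; push_cast; ring⟩, ⟨k + j, by rw [hj]; push_cast; ring⟩⟩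
  · exact Or.inr ⟨⟨k + i, by rw [hi]; push_cast; ring⟩, ⟨k + j, by rw [hj]; push_cast; ring⟩⟩

theorem SameChord.of_rotate (h : SameChord a b y (x + 2 * π)) : SameChord a b x y := by
  rcases h with ⟨⟨i, hi⟩, ⟨j, hj⟩⟩ | ⟨⟨i, hi⟩, ⟨j, hj⟩⟩
  · exact Or.inr ⟨⟨j - 1, by push_cast; linarith⟩, ⟨i, hi⟩⟩
  · exact Or.inl ⟨⟨j - 1, by push_cast; linarith⟩, ⟨i, hi⟩⟩

end Circle

section Dyadic

noncomputable def dyadic (n : ℕ) (m : ℤ) : ℝ := m * π / 2 ^ n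

theorem dyadic_lt_dyadic {n : ℕ} {m m' : ℤ} : dyadic n m < dyadic n m' ↔ m < m' := by
  simp only [dyadic, div_lt_div_iff_of_pos_right (by positivity : (0 : ℝ) < 2 ^ n),
    mul_lt_mul_iff_of_pos_right pi_pos, Int.cast_lt]

theorem dyadic_add_one (n : ℕ) (m : ℤ) : dyadic n (m + 1) = dyadic n m + π / 2 ^ n := by
  simp only [dyadic]; push_cast; ring

theorem dyadic_add_two_pow_mul (n : ℕ) (m k : ℤ) :
    dyadic n (m + 2 ^ (n + 1) * k) = dyadic n m + 2 * π * k := by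
  simp only [dyadic]; push_cast; field_simp; ring

theorem dyadic_add_two_pow (n : ℕ) (m : ℤ) : dyadic n (m + 2 ^ (n + 1)) = dyadic n m + 2 * π := by
  simpa using dyadic_add_two_pow_mul n m 1

theorem dyadic_mul_two_pow (n k : ℕ) (m : ℤ) : dyadic (n + k) (m * 2 ^ k) = dyadic n m := by
  simp only [dyadic]; push_cast; field_simp; ring

theorem dyadic_succ_two_mul (n : ℕ) (m : ℤ) : dyadic (n + 1) (2 * m) = dyadic n m := by
  simpa [mul_comm] using dyadic_mul_two_pow n 1 m

theorem exists_dyadic_le_lt (n : ℕ) (x : ℝ) : ∃ m : ℤ, dyadic n m ≤ x ∧ x < dyadic n (m + 1) := by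
  have hδ : 0 < π / 2 ^ n := by positivity
  have hmul (m : ℤ) : dyadic n m = (m : ℝ) * (π / (2 : ℝ) ^ n) := mul_div_assoc _ _ _
  refine ⟨⌊x / (π / 2 ^ n)⌋, ?_, ?_⟩
  · rw [hmul, ← le_div_iff₀ hδ]
    exact Int.floor_le _
  · rw [hmul, ← div_lt_iff₀ hδ, Int.cast_add, Int.cast_one]
    exact Int.lt_floor_add_one _

theorem exists_dyadic_natCast_add_two_pi_mul (n : ℕ) (m : ℤ) :
    ∃ (m₀ : ℕ) (k : ℤ), m₀ < 2 ^ (n + 1) ∧ dyadic n m = dyadic n m₀ + 2 * π * k ∧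
      dyadic n (m + 1) = dyadic n (m₀ + 1) + 2 * π * k := by
  have hN : (0 : ℤ) < 2 ^ (n + 1) := by positivity
  obtain ⟨m₀, hm₀⟩ := Int.eq_ofNat_of_zero_le (Int.emod_nonneg m hN.ne')
  have hm : dyadic n m = dyadic n m₀ + 2 * π * (m / 2 ^ (n + 1) : ℤ) := by
    rw [← dyadic_add_two_pow_mul, ← hm₀, Int.emod_add_mul_ediv]
  refine ⟨m₀, m / 2 ^ (n + 1), ?_, hm, ?_⟩
  · exact_mod_cast hm₀ ▸ Int.emod_lt_of_pos m hN
  · rw [dyadic_add_one, dyadic_add_one, hm]; ring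

end Dyadic

def NoncrossingDyadic (x y : ℝ) : Prop :=
  ∀ (n : ℕ) (m : ℤ), ¬ CrossesR (dyadic n m) (dyadic n (m + 1)) x y

def IsDyadicChord (x y : ℝ) : Prop :=
  ∃ (n : ℕ) (m : ℤ), SameChord (dyadic n m) (dyadic n (m + 1)) x y

section Maximality

variable {x y : ℝ}

theorem noncrossingDyadic_of_forall_nat
    (h : ∀ n m : ℕ, m < 2 ^ (n + 1) →
      ¬ CrossesR ((m : ℝ) * π / 2 ^ n) ((m + 1 : ℝ) * π / 2 ^ n) x y) :
    NoncrossingDyadic x y := by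
  intro n m hcross
  obtain ⟨m₀, k, hm₀, hm, hm'⟩ := exists_dyadic_natCast_add_two_pi_mul n m
  rw [hm, hm', crossesR_add_two_pi_mul] at hcross
  exact h n m₀ hm₀ (by simpa [dyadic] using hcross)

theorem IsDyadicChord.exists_nat (h : IsDyadicChord x y) :
    ∃ n m : ℕ, m < 2 ^ (n + 1) ∧
      SameChord ((m : ℝ) * π / 2 ^ n) ((m + 1 : ℝ) * π / 2 ^ n) x y := by
  obtain ⟨n, m, hchord⟩ := h
  obtain ⟨m₀, k, hm₀, hm, hm'⟩ := exists_dyadic_natCast_add_two_pi_mul n m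
  rw [hm, hm'] at hchord
  exact ⟨n, m₀, hm₀, by simpa [dyadic] using hchord.of_add_two_pi_mul⟩

theorem NoncrossingDyadic.rotate (h : NoncrossingDyadic x y) : NoncrossingDyadic y (x + 2 * π) :=
  fun n m hcross => h n m (crossesR_comm.mp (crossesR_add_two_pi_right.mp hcross))

theorem IsDyadicChord.of_rotate (h : IsDyadicChord y (x + 2 * π)) : IsDyadicChord x y :=
  let ⟨n, m, hchord⟩ := h
  ⟨n, m, hchord.of_rotate⟩

theorem NoncrossingDyadic.exists_eq_dyadic_left (h : NoncrossingDyadic x y) (hxy : x < y)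
    (hyx : y < x + 2 * π) : ∃ (n : ℕ) (p : ℤ), x = dyadic n p := by
  set ε := min (y - x) (x + 2 * π - y)
  have hε : 0 < ε := lt_min (by linarith) (by linarith)
  obtain ⟨n, hn⟩ := pow_unbounded_of_one_lt (π / ε) one_lt_two
  have hstep : π / 2 ^ n < ε := (div_lt_comm₀ (pow_pos two_pos n) hε).mpr hn
  obtain ⟨p, hpx, hxp⟩ := exists_dyadic_le_lt n x
  rcases hpx.lt_or_eq with hpx | hpx
  · refine absurd ?_ (h n p)
    rw [dyadic_add_one] at hxp ⊢
    exact crossesR_of_lt hpx hxp (by linarith [min_le_left (y - x) (x + 2 * π - y)])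
      (by linarith [min_le_right (y - x) (x + 2 * π - y)])
  · exact ⟨n, p, hpx.symm⟩

theorem NoncrossingDyadic.exists_eq_dyadic_right (h : NoncrossingDyadic x y) (hxy : x < y)
    (hyx : y < x + 2 * π) : ∃ (n : ℕ) (q : ℤ), y = dyadic n q :=
  h.rotate.exists_eq_dyadic_left hyx (by linarith)

theorem exists_common_level (n n' : ℕ) (p q : ℤ) :
    ∃ (u : ℕ) (p' q' : ℤ), dyadic n p = dyadic u p' ∧ dyadic n' q = dyadic u q' :=
  ⟨n + n', p * 2 ^ n', q * 2 ^ n, (dyadic_mul_two_pow n n' p).symm,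
    by rw [add_comm, dyadic_mul_two_pow]⟩

theorem lt_and_lt_of_dyadic {n : ℕ} {p q : ℤ} (hpq : dyadic n p < dyadic n q)
    (hqp : dyadic n q < dyadic n p + 2 * π) : p < q ∧ q < p + 2 ^ (n + 1) :=
  ⟨dyadic_lt_dyadic.mp hpq, dyadic_lt_dyadic.mp (by rwa [dyadic_add_two_pow])⟩

theorem NoncrossingDyadic.isDyadicChord_of_odd {u : ℕ} {s q : ℤ} (h : NoncrossingDyadic x y)
    (hx : x = dyadic (u + 1) (2 * s + 1)) (hy : y = dyadic (u + 1) q) (hxy : x < y)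
    (hyx : y < x + 2 * π) : IsDyadicChord x y := by
  subst hx hy
  obtain ⟨hsq, hqs⟩ := lt_and_lt_of_dyadic hxy hyx
  by_cases hnext : q = 2 * s + 1 + 1
  · exact ⟨u + 1, 2 * s + 1, hnext ▸ sameChord_self _ _⟩
  by_cases hprev : q = 2 * s + 2 ^ (u + 1 + 1)
  · refine ⟨u + 1, 2 * s, Or.inr ⟨⟨0, by simp⟩, ⟨1, ?_⟩⟩⟩
    rw [hprev, dyadic_add_two_pow]; simp
  -- the arc of level `u` around `x` would separate `x` from `y`
  refine absurd (crossesR_of_lt ?_ ?_ ?_ ?_) (h u s) <;>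
    rw [← dyadic_succ_two_mul u] <;> (try rw [← dyadic_add_two_pow]) <;>
    rw [dyadic_lt_dyadic] <;> omega

theorem NoncrossingDyadic.isDyadicChord_of_eq_dyadic (u : ℕ) :
    ∀ {x y : ℝ} {p q : ℤ}, NoncrossingDyadic x y → x = dyadic u p → y = dyadic u q →
      x < y → y < x + 2 * π → IsDyadicChord x y := by
  induction u with
  | zero =>
    rintro x y p q - rfl rfl hxy hyx
    obtain ⟨hpq, hqp⟩ := lt_and_lt_of_dyadic hxy hyx
    obtain rfl : q = p + 1 := by omega
    exact ⟨0, p, sameChord_self _ _⟩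
  | succ u ih =>
    rintro x y p q h hx hy hxy hyx
    obtain ⟨s, rfl | rfl⟩ := Int.even_or_odd' p
    · obtain ⟨t, rfl | rfl⟩ := Int.even_or_odd' q
      · exact ih h (hx.trans (dyadic_succ_two_mul u s)) (hy.trans (dyadic_succ_two_mul u t)) hxy hyx
      · have hx' : x + 2 * π = dyadic (u + 1) (2 * s + 2 ^ (u + 1 + 1)) := by
          rw [hx, dyadic_add_two_pow]
        exact (h.rotate.isDyadicChord_of_odd hy hx' hyx (by linarith)).of_rotate
    · exact h.isDyadicChord_of_odd hx hy hxy hyx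

end Maximality

/-- Maximality of the standard cluster T₀: any pair {x,y} of distinct points of S¹ that
is noncrossing with every dyadic pair (mπ/2ⁿ, (m+1)π/2ⁿ) of T₀ is itself such a dyadic
pair. -/
theorem stmt10 (x y : ℝ) (hxy : x < y) (hxy2 : y < x + 2 * π)
    (h : ∀ n m : ℕ, m < 2 ^ (n + 1) →
      ¬ CrossesR ((m : ℝ) * π / 2 ^ n) ((m + 1 : ℝ) * π / 2 ^ n) x y) :
    ∃ n m : ℕ, m < 2 ^ (n + 1) ∧
      SameChord ((m : ℝ) * π / 2 ^ n) ((m + 1 : ℝ) * π / 2 ^ n) x y := by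
  have hnc := noncrossingDyadic_of_forall_nat h
  obtain ⟨n, p, hx⟩ := hnc.exists_eq_dyadic_left hxy hxy2
  obtain ⟨n', q, hy⟩ := hnc.exists_eq_dyadic_right hxy hxy2
  obtain ⟨u, p', q', hp, hq⟩ := exists_common_level n n' p q
  exact (hnc.isDyadicChord_of_eq_dyadic u (hx.trans hp) (hy.trans hq) hxy hxy2).exists_nat
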